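/- The trace of the symmetrizer S_m on ⨂[ℂ]^m V equals the binomial coefficient (N + m − 1) choose m, i.e. LinearMap.trace ℂ (⨂[ℂ]^m V) S_m = (Nat.choose (N + m - 1) m : ℂ). -/

import Mathlib

open scoped TensorProduct

/-- The permutation operator `P_σ` on the `m`-fold tensor power of `V = Fin N → ℂ`,
sending `v₁ ⊗ ⋯ ⊗ v_m` to `v_{σ⁻¹(1)} ⊗ ⋯ ⊗ v_{σ⁻¹(m)}`. -/
noncomputable def permOp (N m : ℕ) (σ : Equiv.Perm (Fin m)) :
    (⨂[ℂ] _ : Fin m, (Fin N → ℂ)) →ₗ[ℂ] ⨂[ℂ] _ : Fin m, (Fin N → ℂ) :=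
  (PiTensorProduct.reindex ℂ (fun _ : Fin m => (Fin N → ℂ)) σ).toLinearMap

/-- The symmetrizer `S_m = (m!)⁻¹ ∑_σ P_σ` on `V^{⊗ m}`. -/
noncomputable def symmetrizer (N m : ℕ) :
    (⨂[ℂ] _ : Fin m, (Fin N → ℂ)) →ₗ[ℂ] ⨂[ℂ] _ : Fin m, (Fin N → ℂ) :=
  (Nat.factorial m : ℂ)⁻¹ • ∑ σ : Equiv.Perm (Fin m), permOp N m σ

/-!
In the basis `e_{f 1} ⊗ ⋯ ⊗ e_{f m}` of the tensor power, indexed by tuples `f : Fin m → Fin N`,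
each `P_σ` permutes the basis vectors, so its trace is the number of tuples fixed by `σ`.
By Burnside's lemma the average of these numbers over `σ` is the number of orbits of the
symmetric group on tuples, and an orbit is determined by the multiset of values of its tuples:
there are `(N + m - 1).choose m` multisets of size `m` drawn from `Fin N`.
-/

open PiTensorProduct MulAction

-- `σ • f = f ∘ σ⁻¹`, the convention by which `P_σ` moves the factors of a pure tensor.
attribute [local instance] arrowAction

theorem PiTensorProduct.trace_reindex_eq_card_fixedBy {R M κ ι : Type*} [CommRing R]
    [AddCommGroup M] [Module R M] [Fintype ι] [Fintype κ] (b : Module.Basis κ R M) (σ : Equiv.Perm ι)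
    [Fintype (fixedBy (ι → κ) σ)] :
    LinearMap.trace R _ (reindex R (fun _ : ι => M) σ).toLinearMap
      = Fintype.card (fixedBy (ι → κ) σ) := by
  classical
  let B := Basis.piTensorProduct fun _ : ι => b
  have reindex_basis : ∀ p, reindex R (fun _ : ι => M) σ (B p) = B (σ • p) := fun p => by
    simp only [B, Basis.piTensorProduct_apply, reindex_tprod]
    rfl
  rw [LinearMap.trace_eq_matrix_trace R B, Matrix.trace, Fintype.card_subtype]
  simp only [Matrix.diag, LinearMap.toMatrix_apply, LinearEquiv.coe_coe, reindex_basis,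
    Module.Basis.repr_self, Finsupp.single_apply, mem_fixedBy, eq_comm (a := σ • _)]
  rw [Finset.sum_boole]

namespace Sym

variable {α : Type*} {n : ℕ}

def ofFn (f : Fin n → α) : Sym α n := ⟨List.ofFn f, by simp⟩

theorem ofFn_surjective : Function.Surjective (ofFn : (Fin n → α) → Sym α n) := by
  rintro ⟨s, hs⟩
  induction s using Quotient.inductionOn with | h l => ?_
  subst hs
  exact ⟨l.get, Subtype.ext (congrArg (fun l : List α => (l : Multiset α)) (List.ofFn_get l))⟩

theorem ofFn_eq_ofFn_iff {f g : Fin n → α} :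
    ofFn f = ofFn g ↔ ∃ σ : Equiv.Perm (Fin n), σ • g = f := by
  classical
  constructor
  · intro h
    have card_fiber : ∀ a, Fintype.card {i // f i = a} = Fintype.card {i // g i = a} := by
      intro a
      have := congrArg (fun s : Sym α n => Multiset.count a s.1) h
      simp only [ofFn, ← Fin.univ_val_map, Multiset.count_map, eq_comm (a := a)] at this
      rwa [Fintype.card_subtype, Fintype.card_subtype]
    refine ⟨(Equiv.ofFiberEquiv fun a => Fintype.equivOfCardEq (card_fiber a))⁻¹,
      funext fun i => ?_⟩
    exact Equiv.ofFiberEquiv_map _ i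
  · rintro ⟨σ, rfl⟩
    exact Subtype.ext (Multiset.coe_eq_coe.mpr (Equiv.Perm.ofFn_comp_perm σ.symm g))

noncomputable def orbitRelQuotientEquiv :
    orbitRel.Quotient (Equiv.Perm (Fin n)) (Fin n → α) ≃ Sym α n :=
  Equiv.ofBijective (Quotient.lift ofFn fun _ _ h => ofFn_eq_ofFn_iff.mpr h)
    ⟨Quotient.ind₂ fun _ _ h => Quotient.sound (ofFn_eq_ofFn_iff.mp h),
      fun s => let ⟨f, hf⟩ := ofFn_surjective s; ⟨⟦f⟧, hf⟩⟩

theorem card_orbitRel_quotient_eq_multichoose [Fintype α]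
    [Fintype (orbitRel.Quotient (Equiv.Perm (Fin n)) (Fin n → α))] :
    Fintype.card (orbitRel.Quotient (Equiv.Perm (Fin n)) (Fin n → α))
      = (Fintype.card α).multichoose n := by
  classical
  rw [Fintype.card_congr orbitRelQuotientEquiv, card_sym_eq_multichoose]

end Sym

theorem trace_symmetrizer_general (N : ℕ) (m : ℕ) :
    LinearMap.trace ℂ (⨂[ℂ] _ : Fin m, (Fin N → ℂ)) (symmetrizer N m)
      = (Nat.choose (N + m - 1) m : ℂ) := by
  classical
  have burnside :=
    sum_card_fixedBy_eq_card_orbits_mul_card_group (Equiv.Perm (Fin m)) (Fin m → Fin N)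
  rw [Sym.card_orbitRel_quotient_eq_multichoose, Fintype.card_fin, Fintype.card_perm,
    Fintype.card_fin, Nat.multichoose_eq] at burnside
  simp only [symmetrizer, permOp, map_smul, map_sum,
    trace_reindex_eq_card_fixedBy (Pi.basisFun ℂ (Fin N))]
  rw [← Nat.cast_sum, burnside, Nat.cast_mul, smul_eq_mul, mul_comm,
    mul_inv_cancel_right₀ (Nat.cast_ne_zero.mpr m.factorial_ne_zero)]

/-- The trace of the symmetrizer on `V^{⊗ m}` is the binomial coefficient
`(N + m - 1).choose m`. -/
theorem trace_symmetrizer (N : ℕ) (hN : 0 < N) (m : ℕ) :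
    LinearMap.trace ℂ (⨂[ℂ] _ : Fin m, (Fin N → ℂ)) (symmetrizer N m)
      = (Nat.choose (N + m - 1) m : ℂ) :=
  trace_symmetrizer_general N m
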